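/- For every integer d ≥ 2 and every real γ > 0 there exists s₀ ∈ ℕ such that for all integers s ≥ s₀, the distance Ramsey number satisfies R_D(s,s,d) ≤ 4^{(1+γ)·s/⌊d/2⌋}. -/

import Mathlib

/-- A simple graph `H` is isomorphic to a distance graph in `ℝ^d` if there is an
injective map of its vertices into `d`-dimensional Euclidean space sending
adjacent pairs to pairs at Euclidean distance exactly 1. -/
def IsDistGraphRealizable (d : ℕ) {V : Type} (H : SimpleGraph V) : Prop :=
  ∃ φ : V → EuclideanSpace ℝ (Fin d), Function.Injective φ ∧
    ∀ u v : V, H.Adj u v → dist (φ u) (φ v) = 1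

/-- The distance Ramsey number `R_D(s, t, d)`. -/
noncomputable def distRamsey (s t d : ℕ) : ℕ :=
  sInf {n : ℕ | ∀ G : SimpleGraph (Fin n),
    (∃ S : Finset (Fin n), S.card = s ∧
      IsDistGraphRealizable d (G.induce (↑S : Set (Fin n)))) ∨
    (∃ S : Finset (Fin n), S.card = t ∧
      IsDistGraphRealizable d (Gᶜ.induce (↑S : Set (Fin n))))}

/-!
Let `k = ⌊d/2⌋` and `m = ⌊s/k⌋`, so that `s ≤ k (m + 1)`. Every graph on `C(2m, m)` vertices
contains a clique or an independent set of size `m + 1`; removing such sets one after the other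
from a graph on `C(2m, m) + (2k - 2)(m + 1)` vertices gives `2k - 1` disjoint ones, and `k` of
them are of the same kind. Their union induces in `G` or in `Gᶜ` a `k`-colourable graph on at
least `s` vertices, and a `k`-colourable graph is a distance graph in `ℝ^{2k}`: put the `i`-th
colour class on a circle of radius `1/√2` in the `i`-th of `k` mutually orthogonal planes.
Finally `C(2m, m) ≤ 4^m ≤ 4^{s/k}`, and the remaining linear term is absorbed by `4^{γ s/k}`.
-/

open Finset SimpleGraph Filter Function

section OrthogonalFamily

variable {ι E F : Type*} [NormedAddCommGroup E] [InnerProductSpace ℝ E] [NormedAddCommGroup F]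
  [InnerProductSpace ℝ F] {V : ι → F →ₗᵢ[ℝ] E}

theorem OrthogonalFamily.dist_apply_of_ne (hV : OrthogonalFamily ℝ (fun _ => F) V) {i j : ι}
    (hij : i ≠ j) (x y : F) : dist (V i x) (V j y) = √(‖x‖ ^ 2 + ‖y‖ ^ 2) := by
  rw [dist_eq_norm, ← Real.sqrt_sq (norm_nonneg _), norm_sub_sq_real, hV hij x y]
  simp

theorem OrthogonalFamily.apply_eq_apply_iff (hV : OrthogonalFamily ℝ (fun _ => F) V) {i j : ι}
    {x y : F} (hx : x ≠ 0) : V i x = V j y ↔ i = j ∧ x = y := by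
  refine ⟨fun h => ?_, by rintro ⟨rfl, rfl⟩; rfl⟩
  obtain rfl : i = j := by
    by_contra hij
    have := hV hij x y
    rw [← h, real_inner_self_eq_norm_sq, LinearIsometry.norm_map] at this
    exact hx (by simpa using this)
  exact ⟨rfl, (V i).injective h⟩

end OrthogonalFamily

open EuclideanSpace in
noncomputable def coordPlane {ι κ : Type*} [Fintype κ] [DecidableEq κ] (e : ι × Fin 2 ↪ κ)
    (i : ι) : ℂ →ₗᵢ[ℝ] EuclideanSpace ℝ κ where
  toFun z := single (e (i, 0)) z.re + single (e (i, 1)) z.im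
  map_add' z w := by ext j; simp [PiLp.single_apply]; split_ifs <;> ring
  map_smul' c z := by ext j; simp [PiLp.single_apply]
  norm_map' z := by
    change ‖single (e (i, 0)) z.re + single (e (i, 1)) z.im‖ = ‖z‖
    have hne : e (i, 0) ≠ e (i, 1) := by simp
    rw [← sq_eq_sq₀ (norm_nonneg _) (norm_nonneg _), norm_add_sq_real, Complex.sq_norm,
      Complex.normSq_apply]
    simp [inner_single_left, hne, sq]

theorem orthogonalFamily_coordPlane {ι κ : Type*} [Fintype κ] [DecidableEq κ]
    (e : ι × Fin 2 ↪ κ) : OrthogonalFamily ℝ (fun _ => ℂ) (coordPlane e) := by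
  intro i j hij z w
  simp [coordPlane, inner_add_left, inner_add_right, EuclideanSpace.inner_single_left, hij]

theorem exists_injective_complex_norm_eq (V : Type*) [Countable V] {r : ℝ} (hr : 0 < r) :
    ∃ z : V → ℂ, Injective z ∧ ∀ v, ‖z v‖ = r := by
  obtain ⟨f, hf⟩ := Countable.exists_injective_nat V
  set θ : V → ℝ := fun v => Real.arctan (f v)
  have hθ : ∀ v, θ v ∈ Set.Ioc (-Real.pi) Real.pi := fun v =>
    ⟨by linarith [Real.neg_pi_div_two_lt_arctan (f v), Real.pi_pos],
      by linarith [Real.arctan_lt_pi_div_two (f v), Real.pi_pos]⟩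
  refine ⟨fun v => r * (Complex.cos (θ v) + Complex.sin (θ v) * Complex.I), fun u v h => ?_,
    fun v => by simp [Complex.norm_cos_add_sin_mul_I, hr.le]⟩
  have h' := congrArg Complex.arg (mul_left_cancel₀ (by exact_mod_cast hr.ne') h)
  rw [Complex.arg_cos_add_sin_mul_I (hθ u), Complex.arg_cos_add_sin_mul_I (hθ v)] at h'
  exact hf (by exact_mod_cast Real.arctan_injective h')

theorem isDistGraphRealizable_of_coloring {V : Type} {ι : Type*} {H : SimpleGraph V} {d : ℕ}
    {P : ι → ℂ →ₗᵢ[ℝ] EuclideanSpace ℝ (Fin d)} (hP : OrthogonalFamily ℝ (fun _ => ℂ) P)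
    (c : H.Coloring ι) {z : V → ℂ} (hz : Injective z) (hnorm : ∀ v, ‖z v‖ = (√2)⁻¹) :
    IsDistGraphRealizable d H := by
  have hz0 : ∀ v, z v ≠ 0 := fun v => norm_ne_zero_iff.1 (by rw [hnorm]; positivity)
  refine ⟨fun v => P (c v) (z v), fun u v h => hz ((hP.apply_eq_apply_iff (hz0 u)).1 h).2,
    fun u v huv => ?_⟩
  rw [hP.dist_apply_of_ne (c.valid huv), hnorm, hnorm]
  norm_num

theorem isDistGraphRealizable_of_colorable {V : Type} [Countable V] {H : SimpleGraph V}
    {k d : ℕ} (hH : H.Colorable k) (hkd : 2 * k ≤ d) : IsDistGraphRealizable d H := by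
  obtain ⟨c⟩ := hH
  obtain ⟨e⟩ : Nonempty (Fin k × Fin 2 ↪ Fin d) :=
    Embedding.nonempty_of_card_le (by simpa [mul_comm] using hkd)
  obtain ⟨z, hz, hnorm⟩ := exists_injective_complex_norm_eq V (r := (√2)⁻¹) (by positivity)
  exact isDistGraphRealizable_of_coloring (orthogonalFamily_coordPlane e) c hz hnorm

theorem SimpleGraph.colorable_induce_of_subset_biUnion {α : Type*} (H : SimpleGraph α)
    {Q : Finset (Finset α)} (hQ : ∀ T ∈ Q, H.IsIndepSet (T : Set α)) {S : Set α}
    (hS : S ⊆ ⋃ T ∈ Q, (T : Set α)) : (H.induce S).Colorable #Q := by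
  choose f hfQ hfv using fun v (hv : v ∈ S) => Set.mem_iUnion₂.1 (hS hv)
  let c : (H.induce S).Coloring Q := Coloring.mk (fun v => ⟨f v v.2, hfQ v v.2⟩)
    fun {u v} huv hc => by
      have hf : f u u.2 = f v v.2 := congrArg Subtype.val hc
      exact hQ _ (hfQ u u.2) (hfv u u.2) (hf ▸ hfv v v.2) (Subtype.coe_injective.ne huv.ne) huv
  simpa using c.colorable

section Ramsey

variable {α : Type*} [DecidableEq α] (G : SimpleGraph α) [DecidableRel G.Adj]

theorem card_filter_adj_add_card_filter_compl_adj {S : Finset α} {v : α} (hv : v ∈ S) :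
    #((S.erase v).filter (G.Adj v)) + #((S.erase v).filter (Gᶜ.Adj v)) + 1 = #S := by
  have hcompl : (S.erase v).filter (Gᶜ.Adj v) = (S.erase v).filter (¬G.Adj v ·) :=
    filter_congr fun w hw => by simp [compl_adj, (ne_of_mem_erase hw).symm]
  rw [hcompl, card_filter_add_card_filter_not, card_erase_add_one hv]

theorem exists_isNClique_or_isNClique_compl {a b : ℕ} {S : Finset α}
    (hS : (a + b).choose a ≤ #S) :
    ∃ T ⊆ S, G.IsNClique (a + 1) T ∨ Gᶜ.IsNClique (b + 1) T := by
  induction a generalizing b S with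
  | zero =>
    obtain ⟨v, hv⟩ : S.Nonempty := card_pos.1 (by simpa using hS)
    exact ⟨{v}, singleton_subset_iff.2 hv, Or.inl (isNClique_one.2 ⟨v, rfl⟩)⟩
  | succ a iha =>
    induction b generalizing S with
    | zero =>
      obtain ⟨v, hv⟩ : S.Nonempty := card_pos.1 (by simpa using hS)
      exact ⟨{v}, singleton_subset_iff.2 hv, Or.inr (isNClique_one.2 ⟨v, rfl⟩)⟩
    | succ b ihb =>
      obtain ⟨v, hv⟩ : S.Nonempty := card_pos.1 ((Nat.choose_pos (by omega)).trans_le hS)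
      have hsplit := card_filter_adj_add_card_filter_compl_adj G hv
      set N := (S.erase v).filter (G.Adj v)
      set M := (S.erase v).filter (Gᶜ.Adj v)
      have hpascal : (a + 1 + (b + 1)).choose (a + 1) =
          (a + (b + 1)).choose a + (a + 1 + b).choose (a + 1) := by
        rw [show a + 1 + (b + 1) = a + (b + 1) + 1 by omega, Nat.choose_succ_succ,
          show a + (b + 1) = a + 1 + b by omega]
      have hNS : N ⊆ S := (filter_subset _ _).trans (erase_subset _ _)
      have hMS : M ⊆ S := (filter_subset _ _).trans (erase_subset _ _)
      rcases (by omega : (a + (b + 1)).choose a ≤ #N ∨ (a + 1 + b).choose (a + 1) ≤ #M)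
        with hN | hM
      · obtain ⟨T, hTN, hT | hT⟩ := iha hN
        · refine ⟨insert v T, insert_subset hv (hTN.trans hNS), Or.inl ?_⟩
          exact hT.insert fun w hw => (mem_filter.1 (hTN hw)).2
        · exact ⟨T, hTN.trans hNS, Or.inr hT⟩
      · obtain ⟨T, hTM, hT | hT⟩ := ihb hM
        · exact ⟨T, hTM.trans hMS, Or.inl hT⟩
        · refine ⟨insert v T, insert_subset hv (hTM.trans hMS), Or.inr ?_⟩
          exact hT.insert fun w hw => (mem_filter.1 (hTM hw)).2

theorem exists_pairwiseDisjoint_isNClique_or_isNClique_compl {m : ℕ} :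
    ∀ {j : ℕ} {S : Finset α}, (2 * m).choose m + j * (m + 1) ≤ #S →
      ∃ P : Finset (Finset α), #P = j + 1 ∧ (P : Set (Finset α)).PairwiseDisjoint id ∧
        ∀ T ∈ P, T ⊆ S ∧ (G.IsNClique (m + 1) T ∨ Gᶜ.IsNClique (m + 1) T)
  | 0, S, hS => by
    obtain ⟨T, hTS, hT⟩ := exists_isNClique_or_isNClique_compl G (a := m) (b := m) (S := S)
      (by simpa [two_mul] using hS)
    exact ⟨{T}, card_singleton T, by simp, fun T' hT' => mem_singleton.1 hT' ▸ ⟨hTS, hT⟩⟩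
  | j + 1, S, hS => by
    obtain ⟨T, hTS, hT⟩ := exists_isNClique_or_isNClique_compl G (a := m) (b := m) (S := S)
      (by rw [← two_mul]; nlinarith)
    have hTcard : #T = m + 1 := by rcases hT with hT | hT <;> exact hT.card_eq
    obtain ⟨P, hP, hdisj, hPS⟩ := exists_pairwiseDisjoint_isNClique_or_isNClique_compl
      (m := m) (j := j) (S := S \ T)
      (by rw [card_sdiff_of_subset hTS, hTcard]; have := add_one_mul j (m + 1); omega)
    have hTP : ∀ T' ∈ P, Disjoint T T' := fun T' hT' =>
      disjoint_of_subset_right (hPS T' hT').1 disjoint_sdiff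
    have hT_nonempty : T.Nonempty := card_pos.1 (by omega)
    have hTnot : T ∉ P := fun h => hT_nonempty.ne_empty (disjoint_self.1 (hTP T h))
    refine ⟨insert T P, by rw [card_insert_of_notMem hTnot, hP], ?_, ?_⟩
    · rw [coe_insert]
      exact hdisj.insert fun T' hT' _ => hTP T' hT'
    · intro T' hT'
      rcases mem_insert.1 hT' with rfl | hT'
      · exact ⟨hTS, hT⟩
      · exact ⟨(hPS T' hT').1.trans sdiff_subset, (hPS T' hT').2⟩

end Ramsey

theorem exists_card_eq_isDistGraphRealizable_induce {α : Type} [DecidableEq α]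
    {H : SimpleGraph α} {s k d m : ℕ} (hkd : 2 * k ≤ d) (hs : s ≤ k * (m + 1))
    {Q : Finset (Finset α)} (hQ : #Q = k) (hdisj : (Q : Set (Finset α)).PairwiseDisjoint id)
    (hind : ∀ T ∈ Q, H.IsNIndepSet (m + 1) T) :
    ∃ S : Finset α, #S = s ∧ IsDistGraphRealizable d (H.induce (S : Set α)) := by
  have hcard : #(Q.biUnion id) = k * (m + 1) := by
    rw [card_biUnion hdisj]
    simp only [id]
    rw [sum_congr rfl fun T hT => (hind T hT).card_eq, sum_const, hQ, smul_eq_mul]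
  obtain ⟨S, hSQ, hS⟩ := exists_subset_card_eq (hs.trans hcard.ge)
  refine ⟨S, hS, isDistGraphRealizable_of_colorable ?_ hkd⟩
  refine hQ ▸ H.colorable_induce_of_subset_biUnion (fun T hT => (hind T hT).isIndepSet) ?_
  simpa using coe_subset.2 hSQ

theorem distRamsey_le {s d k m : ℕ} (hkd : 2 * k ≤ d) (hs : s ≤ k * (m + 1)) :
    distRamsey s s d ≤ m.centralBinom + (2 * k - 2) * (m + 1) := by
  classical
  refine Nat.sInf_le fun G => ?_
  obtain ⟨P, hP, hdisj, hPmono⟩ := exists_pairwiseDisjoint_isNClique_or_isNClique_compl G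
    (m := m) (j := 2 * k - 2) (S := univ)
    (by rw [card_univ, Fintype.card_fin, Nat.centralBinom_eq_two_mul_choose])
  have hsplit := card_filter_add_card_filter_not (s := P) (G.IsNClique (m + 1))
  rcases (by omega : k ≤ #(P.filter (¬G.IsNClique (m + 1) ·)) ∨
      k ≤ #(P.filter (G.IsNClique (m + 1)))) with hk | hk
  · obtain ⟨Q, hQP, hQ⟩ := exists_subset_card_eq hk
    refine Or.inl (exists_card_eq_isDistGraphRealizable_induce hkd hs hQ
      (hdisj.subset fun T hT => (mem_filter.1 (hQP hT)).1) fun T hT => ?_)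
    obtain ⟨hTP, hT⟩ := mem_filter.1 (hQP hT)
    simpa using (hPmono T hTP).2.resolve_left hT
  · obtain ⟨Q, hQP, hQ⟩ := exists_subset_card_eq hk
    refine Or.inr (exists_card_eq_isDistGraphRealizable_induce hkd hs hQ
      (hdisj.subset fun T hT => (mem_filter.1 (hQP hT)).1) fun T hT => ?_)
    simpa using (mem_filter.1 (hQP hT)).2

theorem eventually_four_pow_add_le_four_rpow {γ : ℝ} (hγ : 0 < γ) (c : ℝ) :
    ∀ᶠ m : ℕ in atTop, (4 : ℝ) ^ m + c * (m + 1) ≤ (4 : ℝ) ^ ((1 + γ) * m) := by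
  have hlin : (fun m : ℕ => c * ((m : ℝ) + 1)) =o[atTop] fun m => (4 : ℝ) ^ m := by
    have h1 := isLittleO_pow_const_const_pow_of_one_lt (R := ℝ) 1 (by norm_num : (1 : ℝ) < 4)
    have h0 := isLittleO_pow_const_const_pow_of_one_lt (R := ℝ) 0 (by norm_num : (1 : ℝ) < 4)
    simpa using (h1.add h0).const_mul_left c
  have hexp : Tendsto (fun m : ℕ => (4 : ℝ) ^ (γ * m)) atTop atTop :=
    (tendsto_rpow_atTop_of_base_gt_one 4 (by norm_num)).comp
      (tendsto_natCast_atTop_atTop.const_mul_atTop hγ)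
  filter_upwards [hlin.bound one_pos, hexp.eventually_ge_atTop 2] with m hm h2
  have hcm : c * (m + 1) ≤ (4 : ℝ) ^ m := (Real.le_norm_self _).trans (hm.trans_eq (by simp))
  rw [add_mul, one_mul, Real.rpow_add (by norm_num), Real.rpow_natCast]
  nlinarith [pow_pos (by norm_num : (0 : ℝ) < 4) m]

theorem distRamsey_upper_bound (d : ℕ) (hd : 2 ≤ d) (γ : ℝ) (hγ : 0 < γ) :
    ∃ s₀ : ℕ, ∀ s : ℕ, s₀ ≤ s →
      (distRamsey s s d : ℝ) ≤ (4 : ℝ) ^ ((1 + γ) * (s : ℝ) / ((d / 2 : ℕ) : ℝ)) := by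
  set k := d / 2
  have hk : 0 < k := by omega
  rw [← eventually_atTop]
  filter_upwards [(Nat.tendsto_div_const_atTop hk.ne').eventually
    (eventually_four_pow_add_le_four_rpow hγ (2 * k))] with s hs
  have hR : distRamsey s s d ≤ 4 ^ (s / k) + 2 * k * (s / k + 1) :=
    (distRamsey_le (by omega) (Nat.lt_mul_div_succ s hk).le).trans
      (add_le_add (Nat.centralBinom_le_four_pow _) (Nat.mul_le_mul_right _ (by omega)))
  calc (distRamsey s s d : ℝ) ≤ 4 ^ (s / k) + 2 * k * ((s / k : ℕ) + 1) := by exact_mod_cast hR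
    _ ≤ 4 ^ ((1 + γ) * (s / k : ℕ)) := hs
    _ ≤ _ := Real.rpow_le_rpow_of_exponent_le (by norm_num) <| by
      rw [mul_div_assoc]
      exact mul_le_mul_of_nonneg_left Nat.cast_div_le (by positivity)
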